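/- Let h(x) = (2/3)·x(2 − x) / (2 − x(2 − x))². Then (i) for every x ∈ [0,1], h(x) = ∫_{[0,1]²} 1{ξ₁ < min(ξ₂, x)} · (h(x) + h(ξ₁) + h(ξ₂)) dξ₁dξ₂, and (ii) ∫₀¹ h(x) dx = 1/3. Consequently the function g(x₁,x₂,x₃) = Σ_{ν=1}^3 h(x_ν) is a probability density on [0,1]³ and is a fixed point of the one-step density recursion of the anisotropic Bak–Sneppen model with three species; i.e., μ(d³x) = (2/3)·[Σ_{ν=1}^3 x_ν(2−x_ν)/(2−x_ν(2−x_ν))²]·1_{[0,1]³}(x) dx is its asymptotic fitness distribution. -/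

import Mathlib

open MeasureTheory

/-- The limiting single-site density `h` of the three-species anisotropic
Bak–Sneppen model. -/
noncomputable def aBsH (x : ℝ) : ℝ :=
  (2 / 3) * (x * (2 - x)) / (2 - x * (2 - x)) ^ 2

/-!
`h` is the derivative of `H t = t² / (3 (2 - t (2 - t)))`, so `∫₀¹ h = H 1 = 1/3`. In the
fixed-point equation the constraint `ξ₁ < min ξ₂ x` cuts out the triangle `ξ₁ < x`, `ξ₁ < ξ₂`;
the inner integral over `ξ₂ ∈ [ξ₁, 1]` is explicit via `H`, and it again has an explicit
primitive `c (s - s²/2) + 2 / (3 (2 - s (2 - s)))` with `c = h x`, whose increment over `[0, x]` is `h x`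
by a rational identity. For three species, replacing sites `ν` and `ν + 1` leaves only site
`ν - 1`, which is also the threshold, so each summand of the recursion is the fixed-point
equation at `x (ν - 1)`.
-/

open Set

section
variable {E : Type*} [NormedAddCommGroup E] [NormedSpace ℝ E] {a b c : ℝ}

theorem intervalIntegral_indicator_Ioi (f : ℝ → E) (hc : c ∈ Icc a b) :
    ∫ t in a..b, (Ioi c).indicator f t = ∫ t in c..b, f t := by
  rw [intervalIntegral.integral_of_le (hc.1.trans hc.2), intervalIntegral.integral_of_le hc.2,
    setIntegral_indicator measurableSet_Ioi, Ioc_inter_Ioi, max_eq_right hc.1]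

theorem intervalIntegral_indicator_Iio (f : ℝ → E) (hc : c ∈ Icc a b) :
    ∫ t in a..b, (Iio c).indicator f t = ∫ t in a..c, f t := by
  rw [intervalIntegral.integral_of_le (hc.1.trans hc.2), intervalIntegral.integral_of_le hc.1,
    setIntegral_indicator measurableSet_Iio]
  have hinter : Ioc a b ∩ Iio c = Ioo a c := by
    ext t
    simp only [mem_inter_iff, mem_Ioc, mem_Iio, mem_Ioo]
    exact ⟨fun h => ⟨h.1.1, h.2⟩, fun h => ⟨⟨h.1, h.2.le.trans hc.2⟩, h.2⟩⟩
  rw [hinter]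
  exact setIntegral_congr_set Ioo_ae_eq_Ioc

theorem intervalIntegral_intervalIntegral_ite_lt_min (F : ℝ → ℝ → E) {x : ℝ}
    (hx : x ∈ Icc a b) :
    ∫ s in a..b, ∫ t in a..b, (if s < min t x then F s t else 0)
      = ∫ s in a..x, ∫ t in s..b, F s t := by
  rw [← intervalIntegral_indicator_Iio _ hx]
  refine intervalIntegral.integral_congr fun s hs => ?_
  rw [uIcc_of_le (hx.1.trans hx.2)] at hs
  by_cases hsx : s < x
  · rw [indicator_of_mem (mem_Iio.2 hsx), ← intervalIntegral_indicator_Ioi _ hs]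
    congr 1 with t
    simp [indicator_apply, hsx]
  · simp [hsx]

end

theorem Fin.sum_update_update_three {α M : Type*} [AddCommMonoid M] (g : α → M) (x : Fin 3 → α)
    (ν : Fin 3) (a b : α) :
    ∑ μ, g (Function.update (Function.update x ν a) (ν + 1) b μ) = g (x (ν - 1)) + g a + g b := by
  fin_cases ν <;> simp [Fin.sum_univ_three, Function.update_apply] <;> abel

theorem setIntegral_univ_pi_Icc_comp_eval {ι : Type*} [Fintype ι] {f : ℝ → ℝ}
    (hf : AEStronglyMeasurable f (volume.restrict (Icc 0 1))) (i : ι) :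
    ∫ x in univ.pi fun _ : ι => Icc (0 : ℝ) 1, f (x i) = ∫ t in Icc 0 1, f t := by
  have : IsProbabilityMeasure (volume.restrict (Icc (0 : ℝ) 1)) := ⟨by simp⟩
  rw [volume_pi, Measure.restrict_pi_pi, integral_comp_eval hf]

lemma two_sub_mul_two_sub_pos (t : ℝ) : 0 < 2 - t * (2 - t) := by nlinarith [sq_nonneg (t - 1)]

@[fun_prop]
lemma continuous_aBsH : Continuous aBsH :=
  Continuous.div (by fun_prop) (by fun_prop) fun t => (pow_pos (two_sub_mul_two_sub_pos t) 2).ne'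

lemma aBsH_nonneg {t : ℝ} (ht : t ∈ Icc (0 : ℝ) 1) : 0 ≤ aBsH t := by
  have : 0 ≤ t * (2 - t) := mul_nonneg ht.1 (by linarith [ht.2])
  unfold aBsH
  positivity

noncomputable def aBsHPrimitive (t : ℝ) : ℝ := t ^ 2 / (3 * (2 - t * (2 - t)))

@[fun_prop]
lemma continuous_aBsHPrimitive : Continuous aBsHPrimitive :=
  Continuous.div (by fun_prop) (by fun_prop) fun t => by
    have := two_sub_mul_two_sub_pos t; positivity

lemma hasDerivAt_two_sub_mul_two_sub (t : ℝ) :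
    HasDerivAt (fun s : ℝ => 2 - s * (2 - s)) (2 * t - 2) t := by
  refine (((hasDerivAt_id' t).fun_mul ((hasDerivAt_id' t).const_sub 2)).const_sub 2).congr_deriv ?_
  ring

lemma hasDerivAt_aBsHPrimitive (t : ℝ) : HasDerivAt aBsHPrimitive (aBsH t) t := by
  have hD := (two_sub_mul_two_sub_pos t).ne'
  refine ((hasDerivAt_pow 2 t).fun_div ((hasDerivAt_two_sub_mul_two_sub t).const_mul 3)
    (by positivity)).congr_deriv ?_
  unfold aBsH
  field_simp
  ring

lemma integral_aBsH (a b : ℝ) : ∫ t in a..b, aBsH t = aBsHPrimitive b - aBsHPrimitive a :=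
  intervalIntegral.integral_eq_sub_of_hasDerivAt (fun t _ => hasDerivAt_aBsHPrimitive t)
    (continuous_aBsH.intervalIntegrable a b)

lemma integral_aBsH_zero_one : ∫ t in (0 : ℝ)..1, aBsH t = 1 / 3 := by
  rw [integral_aBsH]; norm_num [aBsHPrimitive]

lemma integral_const_add_aBsH (c s : ℝ) :
    ∫ t in s..1, (c + aBsH t) = c * (1 - s) + (1 / 3 - aBsHPrimitive s) := by
  rw [intervalIntegral.integral_add intervalIntegrable_const
    (continuous_aBsH.intervalIntegrable _ _), integral_aBsH]
  norm_num [aBsHPrimitive]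
  ring

lemma hasDerivAt_aBsH_doublePrimitive (c t : ℝ) :
    HasDerivAt (fun s => c * (s - s ^ 2 / 2) + 2 / (3 * (2 - s * (2 - s))))
      ((c + aBsH t) * (1 - t) + (1 / 3 - aBsHPrimitive t)) t := by
  have hD := (two_sub_mul_two_sub_pos t).ne'
  refine ((((hasDerivAt_id' t).sub ((hasDerivAt_pow 2 t).div_const 2)).const_mul c).fun_add
    ((hasDerivAt_const t 2).fun_div ((hasDerivAt_two_sub_mul_two_sub t).const_mul 3)
      (by positivity))).congr_deriv ?_
  unfold aBsH aBsHPrimitive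
  field_simp
  ring

lemma integral_integral_tail_aBsH (x : ℝ) :
    ∫ s in (0 : ℝ)..x, ∫ t in s..1, (aBsH x + aBsH s + aBsH t) = aBsH x := by
  have hcont : Continuous fun s => (aBsH x + aBsH s) * (1 - s) + (1 / 3 - aBsHPrimitive s) := by
    fun_prop
  simp_rw [integral_const_add_aBsH]
  rw [intervalIntegral.integral_eq_sub_of_hasDerivAt
    (fun t _ => hasDerivAt_aBsH_doublePrimitive (aBsH x) t) (hcont.intervalIntegrable 0 x)]
  have hD := (two_sub_mul_two_sub_pos x).ne'
  unfold aBsH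
  field_simp
  ring

lemma aBsH_fixedPoint {x : ℝ} (hx : x ∈ Icc (0 : ℝ) 1) :
    ∫ ξ₁ in (0 : ℝ)..1, ∫ ξ₂ in (0 : ℝ)..1,
      (if ξ₁ < min ξ₂ x then aBsH x + aBsH ξ₁ + aBsH ξ₂ else 0) = aBsH x := by
  rw [intervalIntegral_intervalIntegral_ite_lt_min _ hx, integral_integral_tail_aBsH]

lemma setIntegral_unitCube_sum_aBsH :
    ∫ x in univ.pi fun _ : Fin 3 => Icc (0 : ℝ) 1, ∑ ν, aBsH (x ν) = 1 := by
  have hcube : IsCompact (univ.pi fun _ : Fin 3 => Icc (0 : ℝ) 1) :=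
    isCompact_univ_pi fun _ => isCompact_Icc
  have hmarginal : ∫ t in Icc (0 : ℝ) 1, aBsH t = 1 / 3 := by
    rw [integral_Icc_eq_integral_Ioc, ← intervalIntegral.integral_of_le zero_le_one,
      integral_aBsH_zero_one]
  have hcont (ν : Fin 3) : Continuous fun x : Fin 3 → ℝ => aBsH (x ν) := by fun_prop
  rw [integral_finsetSum _ fun ν _ => (hcont ν).continuousOn.integrableOn_compact hcube]
  simp only [setIntegral_univ_pi_Icc_comp_eval continuous_aBsH.aestronglyMeasurable, hmarginal]
  norm_num

/-- (i) `h` satisfies the one-step fixed-point equation of the anisotropic model and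
(ii) `∫₀¹ h = 1/3`; consequently `g(x) = Σ_ν h(x_ν)` is a probability density on
`[0,1]³` and a fixed point of the one-step density recursion of the three-species
anisotropic Bak–Sneppen model (indices mod 3), i.e. the corresponding measure is its
asymptotic fitness distribution. -/
theorem aBs3_stationary_distribution :
    (∀ x ∈ Set.Icc (0 : ℝ) 1,
      aBsH x = ∫ ξ₁ in (0:ℝ)..1, ∫ ξ₂ in (0:ℝ)..1,
        if ξ₁ < min ξ₂ x then aBsH x + aBsH ξ₁ + aBsH ξ₂ else 0)
    ∧ (∫ x in (0:ℝ)..1, aBsH x) = 1 / 3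
    ∧ (∀ x : Fin 3 → ℝ, (∀ ν, x ν ∈ Set.Icc (0 : ℝ) 1) → 0 ≤ ∑ ν : Fin 3, aBsH (x ν))
    ∧ (∫ x in (Set.univ.pi fun _ : Fin 3 => Set.Icc (0 : ℝ) 1),
        ∑ ν : Fin 3, aBsH (x ν)) = 1
    ∧ ∀ x : Fin 3 → ℝ, (∀ ν, x ν ∈ Set.Icc (0 : ℝ) 1) →
        (∑ ν : Fin 3, aBsH (x ν))
          = ∑ ν : Fin 3, ∫ ξ₁ in (0:ℝ)..1, ∫ ξ₂ in (0:ℝ)..1,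
              if ξ₁ < min ξ₂ (x (ν - 1)) then
                ∑ μ : Fin 3, aBsH ((Function.update (Function.update x ν ξ₁) (ν + 1) ξ₂) μ)
              else 0 := by
  refine ⟨fun x hx => (aBsH_fixedPoint hx).symm, integral_aBsH_zero_one,
    fun x hx => Finset.sum_nonneg fun ν _ => aBsH_nonneg (hx ν),
    setIntegral_unitCube_sum_aBsH, fun x hx => ?_⟩
  simp only [Fin.sum_update_update_three, aBsH_fixedPoint (hx _)]
  exact ((Equiv.subRight 1).sum_comp fun ν => aBsH (x ν)).symm
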